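/- arXiv:2512.01553 — 2 statements merged into one kernel-verified Lean document; each statement's English description precedes it below -/
import Mathlib

section
/- The number of orbits, under the simultaneous conjugation action of the symmetric group on 3 letters, of quadruples (σ1, σ2, σ3, σ4) of permutations of a 3-element set such that each σi is a transposition, σ1·σ2·σ3·σ4 = 1, and the subgroup generated by {σ1, σ2, σ3, σ4} acts transitively on the 3-element set, is exactly 4. -/
open Equiv
instance : DecidablePred (Equiv.Perm.IsSwap : Equiv.Perm (Fin 3) → Prop) :=
  fun f => decidable_of_iff (∃ x y, x ≠ y ∧ f = Equiv.swap x y) Iff.rfl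


-- two distinct swaps in S_3 act transitively via words of length ≤ 2
lemma two_swaps_trans : ∀ t u : Equiv.Perm (Fin 3), t.IsSwap → u.IsSwap → t ≠ u →
    ∀ x y : Fin 3, x = y ∨ t x = y ∨ u x = y ∨ t (u x) = y ∨ u (t x) = y := by decide

lemma key (s : Fin 4 → Equiv.Perm (Fin 3)) (hsw : ∀ i, (s i).IsSwap) :
    (∀ x y : Fin 3, ∃ π ∈ Subgroup.closure
        ({s 0, s 1, s 2, s 3} : Set (Equiv.Perm (Fin 3))), π x = y)
    ↔ ¬(s 1 = s 0 ∧ s 2 = s 0 ∧ s 3 = s 0) := by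
  constructor
  · rintro h ⟨h1, h2, h3⟩
    obtain ⟨a, b, hab, hs0⟩ := hsw 0
    -- the point not in {a,b}
    obtain ⟨c, hca, hcb⟩ :=
      (by decide : ∀ a b : Fin 3, a ≠ b → ∃ c : Fin 3, c ≠ a ∧ c ≠ b) a b hab
    obtain ⟨π, hπ, hπc⟩ := h c a
    rw [h1, h2, h3] at hπ
    simp only [Set.insert_idem, Set.pair_eq_singleton] at hπ
    rw [Subgroup.mem_closure_singleton] at hπ
    obtain ⟨n, rfl⟩ := hπ
    have hord : s 0 * s 0 = 1 := by
      rw [hs0]; exact Equiv.swap_mul_self a b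
    have : (s 0) ^ n = 1 ∨ (s 0) ^ n = s 0 := by
      have h2 : (s 0) ^ (2 : ℤ) = 1 := by
        rw [show (2:ℤ) = 1 + 1 from rfl, zpow_add, zpow_one]; exact hord
      rcases Int.even_or_odd n with ⟨k, hk⟩ | ⟨k, hk⟩
      · left; rw [hk, ← two_mul, zpow_mul, h2, one_zpow]
      · right; rw [hk, zpow_add, zpow_mul, h2, one_zpow, zpow_one, one_mul]
    rcases this with h' | h' <;> rw [h'] at hπc
    · exact hca (by simpa using hπc)
    · rw [hs0] at hπc
      rw [Equiv.swap_apply_of_ne_of_ne hca hcb] at hπc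
      exact hca hπc
  · intro h x y
    have : ∃ k : Fin 4, s k ≠ s 0 := by
      by_contra hc
      push_neg at hc
      exact h ⟨hc 1, hc 2, hc 3⟩
    obtain ⟨k, hk⟩ := this
    have hmem : ∀ j : Fin 4, s j ∈ Subgroup.closure
        ({s 0, s 1, s 2, s 3} : Set (Equiv.Perm (Fin 3))) := by
      intro j
      apply Subgroup.subset_closure
      fin_cases j <;> simp
    have h0 := hmem 0
    have hkk := hmem k
    rcases two_swaps_trans (s 0) (s k) (hsw 0) (hsw k) (fun e => hk e.symm) x y with
      h' | h' | h' | h' | h'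
    · exact ⟨1, one_mem _, h'⟩
    · exact ⟨s 0, h0, h'⟩
    · exact ⟨s k, hkk, h'⟩
    · exact ⟨s 0 * s k, mul_mem h0 hkk, h'⟩
    · exact ⟨s k * s 0, mul_mem hkk h0, h'⟩

abbrev Q' (s : Fin 4 → Equiv.Perm (Fin 3)) : Prop :=
  (∀ i, (s i).IsSwap) ∧ s 0 * s 1 * s 2 * s 3 = 1 ∧
    ¬(s 1 = s 0 ∧ s 2 = s 0 ∧ s 3 = s 0)

def rB (s t : {s : Fin 4 → Equiv.Perm (Fin 3) // Q' s}) : Prop :=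
  ∃ ω : Equiv.Perm (Fin 3), ∀ i, t.val i = ω * s.val i * ω⁻¹

instance : DecidableRel rB := fun s t =>
  inferInstanceAs (Decidable (∃ ω : Equiv.Perm (Fin 3), ∀ i, t.val i = ω * s.val i * ω⁻¹))

instance sdB : Setoid {s : Fin 4 → Equiv.Perm (Fin 3) // Q' s} :=
  ⟨rB, by
    constructor
    · intro s; exact ⟨1, fun i => by simp⟩
    · rintro s t ⟨ω, h⟩
      exact ⟨ω⁻¹, fun i => by rw [h i]; group⟩
    · rintro s t u ⟨ω, h⟩ ⟨ω', h'⟩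
      exact ⟨ω' * ω, fun i => by rw [h' i, h i]; group⟩⟩

instance : DecidableRel (α := {s : Fin 4 → Equiv.Perm (Fin 3) // Q' s})
    (· ≈ ·) := inferInstanceAs (DecidableRel rB)

set_option maxRecDepth 100000 in
set_option maxHeartbeats 4000000 in
lemma cardB : Nat.card (Quotient sdB) = 4 := by
  rw [Nat.card_eq_fintype_card]
  decide

def eAB : {s : Fin 4 → Equiv.Perm (Fin 3) //
        (∀ i, (s i).IsSwap) ∧ s 0 * s 1 * s 2 * s 3 = 1 ∧
        ∀ x y : Fin 3, ∃ π ∈ Subgroup.closure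
          ({s 0, s 1, s 2, s 3} : Set (Equiv.Perm (Fin 3))), π x = y} ≃
      {s : Fin 4 → Equiv.Perm (Fin 3) // Q' s} :=
  Equiv.subtypeEquivRight (fun s => by
    constructor
    · rintro ⟨h1, h2, h3⟩; exact ⟨h1, h2, (key s h1).1 h3⟩
    · rintro ⟨h1, h2, h3⟩; exact ⟨h1, h2, (key s h1).2 h3⟩)

/-- There are exactly 4 simultaneous conjugacy classes of quadruples of
transpositions in `S_3` whose product is the identity and which generate a
transitive subgroup. -/
theorem count_orbits_deg3_four_swaps_transitive :
    Nat.card (Quot (fun (s t : {s : Fin 4 → Equiv.Perm (Fin 3) //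
        (∀ i, (s i).IsSwap) ∧ s 0 * s 1 * s 2 * s 3 = 1 ∧
        ∀ x y : Fin 3, ∃ π ∈ Subgroup.closure
          ({s 0, s 1, s 2, s 3} : Set (Equiv.Perm (Fin 3))), π x = y}) =>
      ∃ ω : Equiv.Perm (Fin 3), ∀ i, t.val i = ω * s.val i * ω⁻¹)) = 4 := by
  have eq := Quot.congr
      (ra := fun (s t : {s : Fin 4 → Equiv.Perm (Fin 3) //
        (∀ i, (s i).IsSwap) ∧ s 0 * s 1 * s 2 * s 3 = 1 ∧
        ∀ x y : Fin 3, ∃ π ∈ Subgroup.closure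
          ({s 0, s 1, s 2, s 3} : Set (Equiv.Perm (Fin 3))), π x = y}) =>
      ∃ ω : Equiv.Perm (Fin 3), ∀ i, t.val i = ω * s.val i * ω⁻¹)
      (rb := rB) eAB
      (fun a b => by
        simp only [eAB, Equiv.subtypeEquivRight_apply, rB])
  rw [Nat.card_congr eq]
  exact cardB
end

section
/- The number of orbits, under the simultaneous conjugation action of the symmetric group on 4 letters, of quadruples (σ1, σ2, σ3, σ4) of permutations of a 4-element set such that σ1 and σ2 are 4-cycles, σ3 and σ4 each have cycle type (3,1) (i.e., are 3-cycles fixing exactly one point), and σ1·σ2·σ3·σ4 = 1 is exactly 8. -/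
/-!
Simultaneous conjugation acts freely on these quadruples: an element commuting with the 4-cycle
`σ₁` and the 3-cycle `σ₃` lies in two centralizers of coprime orders 4 and 3, so it is trivial.
Hence the number of orbits is the number of quadruples divided by `|S₄| = 24`. A quadruple is
determined by `(σ₁, σ₂, σ₃)`, and enumerating the `6 · 6 · 8` candidates gives 192 quadruples.
-/

open Equiv Equiv.Perm MulAction Finset

theorem Subgroup.eq_one_of_commute_of_coprime_nat_card_centralizer {G : Type*} [Group G]
    {g h x : G} (hcop : (Nat.card (centralizer {g})).Coprime (Nat.card (centralizer {h})))
    (hxg : Commute x g) (hxh : Commute x h) : x = 1 := by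
  have hg := orderOf_dvd_natCard _ (mem_centralizer_singleton_iff.mpr hxg)
  have hh := orderOf_dvd_natCard _ (mem_centralizer_singleton_iff.mpr hxh)
  exact orderOf_eq_one_iff.mp (Nat.eq_one_of_dvd_one (hcop ▸ Nat.dvd_gcd hg hh))

theorem Equiv.Perm.nat_card_centralizer_of_cycleType_eq_singleton {α : Type*} [Fintype α]
    [DecidableEq α] {g : Perm α} {k : ℕ} (hg : g.cycleType = {k}) :
    Nat.card (Subgroup.centralizer {g}) = (Fintype.card α - k).factorial * k := by
  simp [nat_card_centralizer, hg]

section SimultaneousConjugation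

variable {G ι : Type*} [Group G]

def simultaneousConjSubMulAction (p : (ι → G) → Prop)
    (hp : ∀ (ω : G) s, p s → p fun i => ω * s i * ω⁻¹) :
    SubMulAction (ConjAct G) (ι → G) where
  carrier := {s | p s}
  smul_mem' ω s hs := hp (ConjAct.ofConjAct ω) s hs

theorem nat_card_quot_simultaneousConj_mul_nat_card (p : (ι → G) → Prop)
    (hp : ∀ (ω : G) s, p s → p fun i => ω * s i * ω⁻¹)
    (hfree : ∀ s, p s → ∀ ω : G, (∀ i, Commute ω (s i)) → ω = 1) :
    Nat.card (Quot fun s t : {s // p s} => ∃ ω : G, ∀ i, t.val i = ω * s.val i * ω⁻¹) *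
      Nat.card G = Nat.card {s // p s} := by
  let S := simultaneousConjSubMulAction p hp
  have horbit : Quot (fun s t : {s // p s} => ∃ ω : G, ∀ i, t.val i = ω * s.val i * ω⁻¹) ≃
      orbitRel.Quotient (ConjAct G) S := by
    refine Quot.congrRight fun s t =>
      Iff.trans ?_ ((orbitRel (ConjAct G) S).comm' (x := t) (y := s))
    exact ⟨fun ⟨ω, h⟩ => ⟨ConjAct.toConjAct ω, Subtype.ext (funext fun i => (h i).symm)⟩,
      fun ⟨ω, h⟩ => ⟨ConjAct.ofConjAct ω, fun i => (congrFun (congrArg Subtype.val h) i).symm⟩⟩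
  have hstab (s : S) : stabilizer (ConjAct G) s = ⊥ := by
    refine (Subgroup.eq_bot_iff_forall _).mpr fun ω hω => ?_
    have hcomm (i : ι) : Commute (ConjAct.ofConjAct ω) (s.val i) :=
      mul_inv_eq_iff_eq_mul.mp (congrFun (congrArg Subtype.val (mem_stabilizer_iff.mp hω)) i)
    exact ConjAct.ofConjAct.injective (hfree s.val s.property _ hcomm)
  rw [Nat.card_congr horbit, Nat.card_congr (ConjAct.toConjAct (G := G)).toEquiv,
    ← Nat.card_prod]
  exact (Nat.card_congr (selfEquivOrbitsQuotientProd hstab)).symm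

end SimultaneousConjugation

-- Monodromy tuples of the covers in `H̄_{4,2}((4)², (3,1)²)`.
def IsMonodromyTuple (s : Fin 4 → Perm (Fin 4)) : Prop :=
  (s 0).cycleType = {4} ∧ (s 1).cycleType = {4} ∧
    (s 2).IsThreeCycle ∧ (s 3).IsThreeCycle ∧ s 0 * s 1 * s 2 * s 3 = 1

namespace IsMonodromyTuple

variable {s : Fin 4 → Perm (Fin 4)}

theorem conj (hs : IsMonodromyTuple s) (ω : Perm (Fin 4)) :
    IsMonodromyTuple fun i => ω * s i * ω⁻¹ := by
  obtain ⟨h0, h1, h2, h3, hprod⟩ := hs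
  refine ⟨cycleType_conj.trans h0, cycleType_conj.trans h1, cycleType_conj.trans h2,
    cycleType_conj.trans h3, ?_⟩
  calc ω * s 0 * ω⁻¹ * (ω * s 1 * ω⁻¹) * (ω * s 2 * ω⁻¹) * (ω * s 3 * ω⁻¹)
      = ω * (s 0 * s 1 * s 2 * s 3) * ω⁻¹ := by group
    _ = 1 := by rw [hprod, mul_one, mul_inv_cancel]

theorem eq_one_of_commute (hs : IsMonodromyTuple s) {ω : Perm (Fin 4)}
    (hω : ∀ i, Commute ω (s i)) : ω = 1 := by
  refine Subgroup.eq_one_of_commute_of_coprime_nat_card_centralizer ?_ (hω 0) (hω 2)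
  rw [nat_card_centralizer_of_cycleType_eq_singleton hs.1,
    nat_card_centralizer_of_cycleType_eq_singleton hs.2.2.1]
  decide

theorem eq_inv (hs : IsMonodromyTuple s) : s 3 = (s 0 * s 1 * s 2)⁻¹ :=
  eq_inv_of_mul_eq_one_right hs.2.2.2.2

end IsMonodromyTuple

theorem nat_card_isMonodromyTuple : Nat.card {s // IsMonodromyTuple s} = 192 := by
  have hcount :
      #{x ∈ (({g : Perm (Fin 4) | g.cycleType = {4}} : Finset _) ×ˢ
          ({g : Perm (Fin 4) | g.cycleType = {4}} : Finset _)) ×ˢ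
          ({g : Perm (Fin 4) | g.cycleType = {3}} : Finset _) |
        (x.1.1 * x.1.2 * x.2)⁻¹.cycleType = {3}} = 192 := by
    decide +kernel
  rw [← hcount, ← Nat.card_eq_finsetCard]
  refine Nat.card_congr
    { toFun s := ⟨((s.1 0, s.1 1), s.1 2), ?_⟩
      invFun x := ⟨![x.1.1.1, x.1.1.2, x.1.2, (x.1.1.1 * x.1.1.2 * x.1.2)⁻¹], ?_⟩
      left_inv s := ?_
      right_inv x := rfl }
  · obtain ⟨h0, h1, h2, h3, -⟩ := s.2
    simp only [mem_filter, mem_product, mem_univ, true_and]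
    exact ⟨⟨⟨h0, h1⟩, h2⟩, s.2.eq_inv ▸ h3⟩
  · have hx := x.2
    simp only [mem_filter, mem_product, mem_univ, true_and] at hx
    obtain ⟨⟨⟨h0, h1⟩, h2⟩, h3⟩ := hx
    exact ⟨h0, h1, h2, h3, mul_inv_cancel _⟩
  · exact Subtype.ext (funext fun i => by fin_cases i <;> simp [s.2.eq_inv])

/-- There are exactly 8 simultaneous conjugacy classes of quadruples in `S_4`
consisting of two 4-cycles and two permutations of cycle type (3,1), whose
product is the identity. -/
theorem count_orbits_deg4_two_four_cycles_two_three_cycles :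
    Nat.card (Quot (fun (s t : {s : Fin 4 → Equiv.Perm (Fin 4) //
        (s 0).cycleType = {4} ∧ (s 1).cycleType = {4} ∧
        (s 2).IsThreeCycle ∧ (s 3).IsThreeCycle ∧
        s 0 * s 1 * s 2 * s 3 = 1}) =>
      ∃ ω : Equiv.Perm (Fin 4), ∀ i, t.val i = ω * s.val i * ω⁻¹)) = 8 := by
  have hcount := nat_card_quot_simultaneousConj_mul_nat_card IsMonodromyTuple
    (fun ω _ hs => hs.conj ω) (fun _ hs _ hω => hs.eq_one_of_commute hω)
  rw [nat_card_isMonodromyTuple, Nat.card_perm, Nat.card_fin] at hcount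
  exact Nat.eq_of_mul_eq_mul_right (Nat.factorial_pos 4) (hcount.trans rfl)
end
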